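/- Subsession decomposes via strong subsession: η ⪯ θ if and only if η ⊑ 0 or η ⊑ θ. -/

import Mathlib

/- Values and value types: values are integers or booleans, value types are sets of values. -/
abbrev Value := ℤ ⊕ Bool
abbrev VType := Set Value

def tInt : VType := Set.range Sum.inl
def tBool : VType := Set.range Sum.inr

/-- Session types: failure, success, value input/output, channel input/output (delegation),
external choice, internal choice, parallel composition. -/
inductive SessionType : Type
  | fail
  | succ
  | inV (t : VType) (η : SessionType)
  | outV (t : VType) (η : SessionType)
  | inS (ρ : SessionType) (η : SessionType)
  | outS (ρ : SessionType) (η : SessionType)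
  | choice (η θ : SessionType)
  | ichoice (η θ : SessionType)
  | par (η θ : SessionType)

open SessionType

/-- Labels of visible transitions. -/
inductive Label : Type
  | tick
  | inV (v : Value)
  | outV (v : Value)
  | inS (ρ : SessionType)
  | outS (ρ : SessionType)

/-- Visible (labeled) transitions of session types (rules r1,r3,r4,r5,r7,r9,r11,r12
and the symmetric variants). -/
inductive Vis : SessionType → Label → SessionType → Prop
  | r1 : Vis succ Label.tick succ
  | r3 (v : Value) (η : SessionType) : Vis (outV {v} η) (Label.outV v) η
  | r4 (ρ η : SessionType) : Vis (outS ρ η) (Label.outS ρ) η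
  | r5 (ρ η : SessionType) : Vis (inS ρ η) (Label.inS ρ) η
  | r7 {v : Value} {t : VType} (η : SessionType) : v ∈ t → Vis (inV t η) (Label.inV v) η
  | r9l {η μ η'} (θ : SessionType) : Vis η μ η' → Vis (choice η θ) μ η'
  | r9r {θ μ θ'} (η : SessionType) : Vis θ μ θ' → Vis (choice η θ) μ θ'
  | r11l {η μ η'} (θ : SessionType) : Vis η μ η' → μ ≠ Label.tick → Vis (par η θ) μ (par η' θ)
  | r11r {θ μ θ'} (η : SessionType) : Vis θ μ θ' → μ ≠ Label.tick → Vis (par η θ) μ (par η θ')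
  | r12 {η η' θ θ' : SessionType} : Vis η Label.tick η' → Vis θ Label.tick θ' →
      Vis (par η θ) Label.tick (par η' θ')

/-- Internal (unlabeled) transitions of session types (rules r2,r6,r8,r10,r13,r14,r15 and
symmetric variants), parameterized by the subtyping relation `sub` used in rules r14/r15. -/
inductive Red (sub : SessionType → SessionType → Prop) : SessionType → SessionType → Prop
  | r2l (η θ : SessionType) : Red sub (ichoice η θ) η
  | r2r (η θ : SessionType) : Red sub (ichoice η θ) θ
  | r6 {v : Value} {t : VType} (η : SessionType) : v ∈ t → Red sub (outV t η) (outV {v} η)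
  | r8l {η η'} (θ : SessionType) : Red sub η η' → Red sub (choice η θ) (choice η' θ)
  | r8r {θ θ'} (η : SessionType) : Red sub θ θ' → Red sub (choice η θ) (choice η θ')
  | r10l {η η'} (θ : SessionType) : Red sub η η' → Red sub (par η θ) (par η' θ)
  | r10r {θ θ'} (η : SessionType) : Red sub θ θ' → Red sub (par η θ) (par η θ')
  | r13l {η η' θ θ' : SessionType} {v : Value} : Vis η (Label.outV v) η' →
      Vis θ (Label.inV v) θ' → Red sub (par η θ) (par η' θ')
  | r13r {η η' θ θ' : SessionType} {v : Value} : Vis η (Label.inV v) η' →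
      Vis θ (Label.outV v) θ' → Red sub (par η θ) (par η' θ')
  | r14l {η η' θ θ' ρ ρ' : SessionType} : Vis η (Label.outS ρ) η' →
      Vis θ (Label.inS ρ') θ' → sub ρ ρ' → Red sub (par η θ) (par η' θ')
  | r14r {η η' θ θ' ρ ρ' : SessionType} : Vis η (Label.inS ρ') η' →
      Vis θ (Label.outS ρ) θ' → sub ρ ρ' → Red sub (par η θ) (par η' θ')
  | r15l {η η' θ θ' ρ ρ' : SessionType} : Vis η (Label.outS ρ) η' →
      Vis θ (Label.inS ρ') θ' → ¬ sub ρ ρ' → Red sub (par η θ) fail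
  | r15r {η η' θ θ' ρ ρ' : SessionType} : Vis η (Label.inS ρ') η' →
      Vis θ (Label.outS ρ) θ' → ¬ sub ρ ρ' → Red sub (par η θ) fail

/-- Weight of a session type: nesting depth of session types occurring in channel
input/output prefixes (used to break the circularity between transitions and subsession). -/
def weight : SessionType → ℕ
  | fail => 0
  | succ => 0
  | inV _ η => weight η
  | outV _ η => weight η
  | inS ρ η => max (weight ρ + 1) (weight η)
  | outS ρ η => max (weight ρ + 1) (weight η)
  | choice η θ => max (weight η) (weight θ)
  | ichoice η θ => max (weight η) (weight θ)
  | par η θ => max (weight η) (weight θ)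

/-- Reflexive-transitive closure of internal transitions. -/
def Reds (sub : SessionType → SessionType → Prop) : SessionType → SessionType → Prop :=
  Relation.ReflTransGen (Red sub)

/-- η can weakly perform the success action ✓. -/
def CanTick (sub : SessionType → SessionType → Prop) (η : SessionType) : Prop :=
  ∃ η' η'', Reds sub η η' ∧ Vis η' Label.tick η''

/-- Completeness: every internal reduct can weakly perform ✓. -/
def CompleteP (sub : SessionType → SessionType → Prop) (η : SessionType) : Prop :=
  ∀ η', Reds sub η η' → CanTick sub η'

/-- Subsession: preservation of completeness in all parallel contexts. -/
def PreceqP (sub : SessionType → SessionType → Prop) (η θ : SessionType) : Prop :=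
  ∀ ρ, CompleteP sub (par η ρ) → CompleteP sub (par θ ρ)

/-- Stratified approximations of the subsession relation. -/
def SubW : ℕ → SessionType → SessionType → Prop
  | 0 => fun _ _ => True
  | n + 1 => PreceqP (SubW n)

/-- The (stratified) subtyping relation used in the synchronization rules r14/r15:
at weight `n` it only depends on the strata below. -/
def SubRel (ρ ρ' : SessionType) : Prop := SubW (max (weight ρ) (weight ρ') + 1) ρ ρ'

/-- η is complete. -/
def SComplete (η : SessionType) : Prop := CompleteP SubRel η

/-- The subsession relation η ⪯ θ. -/
def Preceq (η θ : SessionType) : Prop := PreceqP SubRel η θ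

/-- The equivalence ≈ induced by ⪯. -/
def SEquiv (η θ : SessionType) : Prop := Preceq η θ ∧ Preceq θ η

/-- η is viable if some parallel context completes it. -/
def Viable (η : SessionType) : Prop := ∃ ρ, SComplete (par η ρ)

/-- Strong subsession η ⊑ θ : the closure of ⪯ under external-choice contexts. -/
def SSub (η θ : SessionType) : Prop := ∀ ρ, Preceq (choice η ρ) (choice θ ρ)

/-- The equivalence ≃ induced by ⊑. -/
def SSEquiv (η θ : SessionType) : Prop := SSub η θ ∧ SSub θ η

/-- Actions (prefixes) of session types. -/
inductive Act : Type
  | inV (t : VType)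
  | outV (t : VType)
  | inS (ρ : SessionType)
  | outS (ρ : SessionType)

/-- Prefixing a session type by an action. -/
def Act.pre : Act → SessionType → SessionType
  | .inV t, η => SessionType.inV t η
  | .outV t, η => SessionType.outV t η
  | .inS ρ, η => SessionType.inS ρ η
  | .outS ρ, η => SessionType.outS ρ η

/-!
If η has no completing context, then η ⪯ 0 vacuously, and a context completing η + ρ can
only reach ✓ through ρ, so η ⊑ 0. If some σ₀ completes η, then any σ completing η + ρ
makes σ + σ₀ a context completing η, hence θ; this handles the runs of (θ + ρ) | σ in which θ
synchronises with σ. Along a run that has not yet committed, either the residual of ρ can still reach ✓ against the residual σ' of σ, or the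
corresponding run of (η + ρ) | σ can only succeed through η, so σ' completes η and thus θ.
Conversely, taking ρ = 0 in η ⊑ θ gives η ⪯ η + 0 ⪯ θ + 0 ⪯ θ, while η ⊑ 0 would give
η ⪯ 0 + 0, which nothing completes.
-/

section Completeness

variable {sub : SessionType → SessionType → Prop}

inductive IsSync (sub : SessionType → SessionType → Prop) (a c : SessionType) :
    SessionType → Prop
  | s13l {v : Value} {a' c' : SessionType} : Vis a (Label.outV v) a' →
      Vis c (Label.inV v) c' → IsSync sub a c (par a' c')
  | s13r {v : Value} {a' c' : SessionType} : Vis a (Label.inV v) a' →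
      Vis c (Label.outV v) c' → IsSync sub a c (par a' c')
  | s14l {p p' a' c' : SessionType} : Vis a (Label.outS p) a' →
      Vis c (Label.inS p') c' → sub p p' → IsSync sub a c (par a' c')
  | s14r {p p' a' c' : SessionType} : Vis a (Label.inS p') a' →
      Vis c (Label.outS p) c' → sub p p' → IsSync sub a c (par a' c')
  | s15l {p p' a' c' : SessionType} : Vis a (Label.outS p) a' →
      Vis c (Label.inS p') c' → ¬ sub p p' → IsSync sub a c fail
  | s15r {p p' a' c' : SessionType} : Vis a (Label.inS p') a' →
      Vis c (Label.outS p) c' → ¬ sub p p' → IsSync sub a c fail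

lemma not_vis_fail {μ : Label} {u : SessionType} : ¬ Vis fail μ u := nofun

lemma vis_choice_cases {a b u : SessionType} {μ : Label} (h : Vis (choice a b) μ u) :
    Vis a μ u ∨ Vis b μ u := by
  cases h with
  | r9l _ h => exact .inl h
  | r9r _ h => exact .inr h

lemma vis_par_tick_cases {a c u : SessionType} (h : Vis (par a c) Label.tick u) :
    ∃ a' c', Vis a Label.tick a' ∧ Vis c Label.tick c' ∧ u = par a' c' := by
  cases h with
  | r11l _ _ hne => exact absurd rfl hne
  | r11r _ _ hne => exact absurd rfl hne
  | r12 h₁ h₂ => exact ⟨_, _, h₁, h₂, rfl⟩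

namespace IsSync

variable {a b c d W : SessionType}

lemma red (h : IsSync sub a c W) : Red sub (par a c) W := by
  cases h with
  | s13l h₁ h₂ => exact .r13l h₁ h₂
  | s13r h₁ h₂ => exact .r13r h₁ h₂
  | s14l h₁ h₂ h₃ => exact .r14l h₁ h₂ h₃
  | s14r h₁ h₂ h₃ => exact .r14r h₁ h₂ h₃
  | s15l h₁ h₂ h₃ => exact .r15l h₁ h₂ h₃
  | s15r h₁ h₂ h₃ => exact .r15r h₁ h₂ h₃

lemma mono (h : IsSync sub a c W) (hab : ∀ μ u, Vis a μ u → Vis b μ u)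
    (hcd : ∀ μ u, Vis c μ u → Vis d μ u) : IsSync sub b d W := by
  cases h with
  | s13l h₁ h₂ => exact .s13l (hab _ _ h₁) (hcd _ _ h₂)
  | s13r h₁ h₂ => exact .s13r (hab _ _ h₁) (hcd _ _ h₂)
  | s14l h₁ h₂ h₃ => exact .s14l (hab _ _ h₁) (hcd _ _ h₂) h₃
  | s14r h₁ h₂ h₃ => exact .s14r (hab _ _ h₁) (hcd _ _ h₂) h₃
  | s15l h₁ h₂ h₃ => exact .s15l (hab _ _ h₁) (hcd _ _ h₂) h₃
  | s15r h₁ h₂ h₃ => exact .s15r (hab _ _ h₁) (hcd _ _ h₂) h₃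

lemma choice_left_cases (h : IsSync sub (choice a b) c W) :
    IsSync sub a c W ∨ IsSync sub b c W := by
  cases h with
  | s13l h₁ h₂ => exact (vis_choice_cases h₁).imp (.s13l · h₂) (.s13l · h₂)
  | s13r h₁ h₂ => exact (vis_choice_cases h₁).imp (.s13r · h₂) (.s13r · h₂)
  | s14l h₁ h₂ h₃ => exact (vis_choice_cases h₁).imp (.s14l · h₂ h₃) (.s14l · h₂ h₃)
  | s14r h₁ h₂ h₃ => exact (vis_choice_cases h₁).imp (.s14r · h₂ h₃) (.s14r · h₂ h₃)
  | s15l h₁ h₂ h₃ => exact (vis_choice_cases h₁).imp (.s15l · h₂ h₃) (.s15l · h₂ h₃)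
  | s15r h₁ h₂ h₃ => exact (vis_choice_cases h₁).imp (.s15r · h₂ h₃) (.s15r · h₂ h₃)

lemma choice_right_cases (h : IsSync sub a (choice c d) W) :
    IsSync sub a c W ∨ IsSync sub a d W := by
  cases h with
  | s13l h₁ h₂ => exact (vis_choice_cases h₂).imp (.s13l h₁ ·) (.s13l h₁ ·)
  | s13r h₁ h₂ => exact (vis_choice_cases h₂).imp (.s13r h₁ ·) (.s13r h₁ ·)
  | s14l h₁ h₂ h₃ => exact (vis_choice_cases h₂).imp (.s14l h₁ · h₃) (.s14l h₁ · h₃)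
  | s14r h₁ h₂ h₃ => exact (vis_choice_cases h₂).imp (.s14r h₁ · h₃) (.s14r h₁ · h₃)
  | s15l h₁ h₂ h₃ => exact (vis_choice_cases h₂).imp (.s15l h₁ · h₃) (.s15l h₁ · h₃)
  | s15r h₁ h₂ h₃ => exact (vis_choice_cases h₂).imp (.s15r h₁ · h₃) (.s15r h₁ · h₃)

lemma not_fail_left : ¬ IsSync sub fail c W := by
  rintro (⟨h, -⟩ | ⟨h, -⟩ | ⟨h, -, -⟩ | ⟨h, -, -⟩ | ⟨h, -, -⟩ | ⟨h, -, -⟩) <;> cases h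

end IsSync

lemma red_par_cases {a c W : SessionType} (h : Red sub (par a c) W) :
    (∃ a', Red sub a a' ∧ W = par a' c) ∨ (∃ c', Red sub c c' ∧ W = par a c') ∨
      IsSync sub a c W := by
  cases h with
  | r10l _ h => exact .inl ⟨_, h, rfl⟩
  | r10r _ h => exact .inr (.inl ⟨_, h, rfl⟩)
  | r13l h₁ h₂ => exact .inr (.inr (.s13l h₁ h₂))
  | r13r h₁ h₂ => exact .inr (.inr (.s13r h₁ h₂))
  | r14l h₁ h₂ h₃ => exact .inr (.inr (.s14l h₁ h₂ h₃))
  | r14r h₁ h₂ h₃ => exact .inr (.inr (.s14r h₁ h₂ h₃))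
  | r15l h₁ h₂ h₃ => exact .inr (.inr (.s15l h₁ h₂ h₃))
  | r15r h₁ h₂ h₃ => exact .inr (.inr (.s15r h₁ h₂ h₃))

lemma reds_fail {u : SessionType} (h : Reds sub fail u) : u = fail := by
  induction h with
  | refl => rfl
  | tail _ hstep ih => subst ih; cases hstep

lemma reds_choice_left {a a' : SessionType} (b : SessionType) (h : Reds sub a a') :
    Reds sub (choice a b) (choice a' b) :=
  Relation.ReflTransGen.lift (choice · b) (fun _ _ => Red.r8l b) _ _ h

lemma reds_choice_right {a a' : SessionType} (b : SessionType) (h : Reds sub a a') :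
    Reds sub (choice b a) (choice b a') :=
  Relation.ReflTransGen.lift (choice b ·) (fun _ _ => Red.r8r b) _ _ h

lemma reds_par {a a' c c' : SessionType} (ha : Reds sub a a') (hc : Reds sub c c') :
    Reds sub (par a c) (par a' c') :=
  (Relation.ReflTransGen.lift (par · c) (fun _ _ => Red.r10l c) _ _ ha).trans
    (Relation.ReflTransGen.lift (par a' ·) (fun _ _ => Red.r10r a') _ _ hc)

lemma reds_choice_cases {a b u : SessionType} (h : Reds sub (choice a b) u) :
    ∃ a' b', u = choice a' b' ∧ Reds sub a a' ∧ Reds sub b b' := by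
  induction h with
  | refl => exact ⟨a, b, rfl, .refl, .refl⟩
  | tail _ hstep ih =>
    obtain ⟨a', b', rfl, ha, hb⟩ := ih
    cases hstep with
    | r8l _ h => exact ⟨_, b', rfl, ha.tail h, hb⟩
    | r8r _ h => exact ⟨a', _, rfl, ha, hb.tail h⟩

lemma CompleteP.reds {u v : SessionType} (hC : CompleteP sub u) (h : Reds sub u v) :
    CompleteP sub v :=
  fun w hw => hC w (h.trans hw)

lemma canTick_of_reds {u v : SessionType} (h : Reds sub u v) (hv : CanTick sub v) :
    CanTick sub u :=
  let ⟨w, w', hw, ht⟩ := hv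
  ⟨w, w', h.trans hw, ht⟩

def SyncReds (sub : SessionType → SessionType → Prop) (a c Z : SessionType) : Prop :=
  ∃ a' c' W, Reds sub a a' ∧ Reds sub c c' ∧ IsSync sub a' c' W ∧ Reds sub W Z

lemma reds_par_cases {a c Z : SessionType} (h : Reds sub (par a c) Z) :
    (∃ a' c', Z = par a' c' ∧ Reds sub a a' ∧ Reds sub c c') ∨ SyncReds sub a c Z := by
  induction h with
  | refl => exact .inl ⟨a, c, rfl, .refl, .refl⟩
  | tail _ hstep ih =>
    rcases ih with ⟨a', c', rfl, ha, hc⟩ | ⟨a', c', W, ha, hc, hs, hW⟩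
    · rcases red_par_cases hstep with ⟨a'', h, rfl⟩ | ⟨c'', h, rfl⟩ | hs
      · exact .inl ⟨a'', c', rfl, ha.tail h, hc⟩
      · exact .inl ⟨a', c'', rfl, ha, hc.tail h⟩
      · exact .inr ⟨a', c', _, ha, hc, hs, .refl⟩
    · exact .inr ⟨a', c', W, ha, hc, hs, hW.tail hstep⟩

namespace SyncReds

variable {a b c d Z : SessionType}

lemma reds (h : SyncReds sub a c Z) : Reds sub (par a c) Z :=
  let ⟨_, _, _, ha, hc, hs, hW⟩ := h
  ((reds_par ha hc).tail hs.red).trans hW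

lemma choice_left_cases (h : SyncReds sub (choice a b) c Z) :
    SyncReds sub a c Z ∨ SyncReds sub b c Z := by
  obtain ⟨e, c', W, he, hc, hs, hW⟩ := h
  obtain ⟨a', b', rfl, ha, hb⟩ := reds_choice_cases he
  exact hs.choice_left_cases.imp (⟨a', c', W, ha, hc, ·, hW⟩) (⟨b', c', W, hb, hc, ·, hW⟩)

lemma choice_right_cases (h : SyncReds sub a (choice c d) Z) :
    SyncReds sub a c Z ∨ SyncReds sub a d Z := by
  obtain ⟨a', e, W, ha, he, hs, hW⟩ := h
  obtain ⟨c', d', rfl, hc, hd⟩ := reds_choice_cases he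
  exact hs.choice_right_cases.imp (⟨a', c', W, ha, hc, ·, hW⟩) (⟨a', d', W, ha, hd, ·, hW⟩)

lemma not_fail_left : ¬ SyncReds sub fail c Z := by
  rintro ⟨f, c', W, hf, -, hs, -⟩
  obtain rfl := reds_fail hf
  exact IsSync.not_fail_left hs

end SyncReds

def Covers (sub : SessionType → SessionType → Prop) (b a : SessionType) : Prop :=
  ∀ a', Reds sub a a' → ∃ b', Reds sub b b' ∧ ∀ μ u, Vis a' μ u → Vis b' μ u

lemma covers_refl (a : SessionType) : Covers sub a a :=
  fun a' h => ⟨a', h, fun _ _ => id⟩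

lemma covers_choice_left (a b : SessionType) : Covers sub (choice a b) a :=
  fun a' h => ⟨choice a' b, reds_choice_left b h, fun _ _ => Vis.r9l b⟩

lemma covers_choice_right (a b : SessionType) : Covers sub (choice b a) a :=
  fun a' h => ⟨choice b a', reds_choice_right b h, fun _ _ => Vis.r9r b⟩

lemma SyncReds.of_covers {a b c d Z : SessionType} (h : SyncReds sub a c Z)
    (hab : Covers sub b a) (hcd : Covers sub d c) : SyncReds sub b d Z := by
  obtain ⟨a', c', W, ha, hc, hs, hW⟩ := h
  obtain ⟨b', hb, hvb⟩ := hab a' ha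
  obtain ⟨d', hd, hvd⟩ := hcd c' hc
  exact ⟨b', d', W, hb, hd, hs.mono hvb hvd, hW⟩

lemma CanTick.of_covers {a b c d : SessionType} (h : CanTick sub (par a c))
    (hab : Covers sub b a) (hcd : Covers sub d c) : CanTick sub (par b d) := by
  obtain ⟨Z, Z', hZ, ht⟩ := h
  rcases reds_par_cases hZ with ⟨a', c', rfl, ha, hc⟩ | hs
  · obtain ⟨u, w, hu, hw, rfl⟩ := vis_par_tick_cases ht
    obtain ⟨b', hb, hvb⟩ := hab a' ha
    obtain ⟨d', hd, hvd⟩ := hcd c' hc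
    exact ⟨par b' d', par u w, reds_par hb hd, .r12 (hvb _ _ hu) (hvd _ _ hw)⟩
  · exact ⟨Z, Z', (hs.of_covers hab hcd).reds, ht⟩

lemma canTick_par_choice_iff {a b c : SessionType} :
    CanTick sub (par (choice a b) c) ↔ CanTick sub (par a c) ∨ CanTick sub (par b c) := by
  refine ⟨fun ⟨Z, Z', hZ, ht⟩ => ?_, fun h => ?_⟩
  · rcases reds_par_cases hZ with ⟨e, c', rfl, he, hc⟩ | hs
    · obtain ⟨u, w, hu, hw, rfl⟩ := vis_par_tick_cases ht
      obtain ⟨a', b', rfl, ha, hb⟩ := reds_choice_cases he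
      exact (vis_choice_cases hu).imp (fun hu => ⟨par a' c', _, reds_par ha hc, .r12 hu hw⟩)
        (fun hu => ⟨par b' c', _, reds_par hb hc, .r12 hu hw⟩)
    · exact hs.choice_left_cases.imp (fun hs => ⟨Z, Z', hs.reds, ht⟩)
        (fun hs => ⟨Z, Z', hs.reds, ht⟩)
  · rcases h with h | h
    · exact h.of_covers (covers_choice_left a b) (covers_refl c)
    · exact h.of_covers (covers_choice_right b a) (covers_refl c)

lemma not_canTick_par_fail {c : SessionType} : ¬ CanTick sub (par fail c) := by
  rintro ⟨Z, Z', hZ, ht⟩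
  rcases reds_par_cases hZ with ⟨f, c', rfl, hf, -⟩ | hs
  · obtain rfl := reds_fail hf
    obtain ⟨u, w, hu, -, -⟩ := vis_par_tick_cases ht
    exact not_vis_fail hu
  · exact SyncReds.not_fail_left hs

lemma not_completeP_par_choice_fail_fail {c : SessionType} :
    ¬ CompleteP sub (par (choice fail fail) c) := fun hC =>
  (canTick_par_choice_iff.1 (hC _ .refl)).elim not_canTick_par_fail not_canTick_par_fail

lemma CompleteP.of_par_choice {a b c : SessionType} (hC : CompleteP sub (par (choice a b) c))
    (hb : ¬ CanTick sub (par b c)) : CompleteP sub (par a c) := by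
  intro Z hZ
  rcases reds_par_cases hZ with ⟨a', c', rfl, ha, hc⟩ | hs
  · refine (canTick_par_choice_iff.1 (hC _ (reds_par (reds_choice_left b ha) hc))).resolve_right
      fun hb' => hb (canTick_of_reds (reds_par .refl hc) hb')
  · exact hC Z (hs.of_covers (covers_choice_left a b) (covers_refl c)).reds

lemma completeP_par_choice_fail_iff {a c : SessionType} :
    CompleteP sub (par (choice a fail) c) ↔ CompleteP sub (par a c) := by
  refine ⟨(·.of_par_choice not_canTick_par_fail), fun hC Z hZ => ?_⟩
  rcases reds_par_cases hZ with ⟨e, c', rfl, he, hc⟩ | hs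
  · obtain ⟨a', f, rfl, ha, hf⟩ := reds_choice_cases he
    obtain rfl := reds_fail hf
    exact canTick_par_choice_iff.2 (.inl (hC _ (reds_par ha hc)))
  · exact hs.choice_left_cases.elim (fun hs => hC Z hs.reds) (absurd · SyncReds.not_fail_left)

/-- Runs synchronising with `c` are runs of `(a + b) | c`; all others are covered by `c₀`. -/
lemma CompleteP.par_choice_merge {a b c c₀ : SessionType}
    (hC : CompleteP sub (par (choice a b) c)) (hC₀ : CompleteP sub (par a c₀)) :
    CompleteP sub (par a (choice c c₀)) := by
  intro Z hZ
  rcases reds_par_cases hZ with ⟨a', e, rfl, ha, he⟩ | hs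
  · obtain ⟨c', c₀', rfl, -, hc₀⟩ := reds_choice_cases he
    exact (hC₀ _ (reds_par ha hc₀)).of_covers (covers_refl a') (covers_choice_right c₀' c')
  · rcases hs.choice_right_cases with hs | hs
    · exact hC Z (hs.of_covers (covers_choice_left a b) (covers_refl c)).reds
    · exact hC₀ Z hs.reds

/-- Serves both directions of the theorem, with `θ := fail` when `η` is not viable. -/
lemma CompleteP.par_choice_of_preceqP {η θ ρ σ : SessionType} (h : PreceqP sub η θ)
    (hC : CompleteP sub (par (choice η ρ) σ)) (hθ : ∀ Z, SyncReds sub θ σ Z → CanTick sub Z) :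
    CompleteP sub (par (choice θ ρ) σ) := by
  intro Z hZ
  rcases reds_par_cases hZ with ⟨e, σ', rfl, he, hσ⟩ | hs
  · obtain ⟨θ', ρ', rfl, hθ', hρ⟩ := reds_choice_cases he
    rw [canTick_par_choice_iff]
    by_cases hρσ : CanTick sub (par ρ' σ')
    · exact .inr hρσ
    · have hη : CompleteP sub (par η σ') :=
        (hC.reds (reds_par (reds_choice_right η hρ) hσ)).of_par_choice hρσ
      exact .inl (h σ' hη _ (reds_par hθ' .refl))
  · rcases hs.choice_left_cases with hs | hs
    · exact hθ Z hs
    · exact hC Z (hs.of_covers (covers_choice_right ρ η) (covers_refl σ)).reds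

end Completeness

theorem preceq_iff_ssub (η θ : SessionType) :
    Preceq η θ ↔ (SSub η SessionType.fail ∨ SSub η θ) := by
  constructor
  · intro h
    by_cases hv : Viable η
    · obtain ⟨σ₀, hσ₀⟩ := hv
      refine .inr fun ρ σ hC => hC.par_choice_of_preceqP h fun Z hZ => ?_
      have hθ : CompleteP SubRel (par θ (choice σ σ₀)) := h _ (hC.par_choice_merge hσ₀)
      exact hθ Z (hZ.of_covers (covers_refl θ) (covers_choice_left σ σ₀)).reds
    · exact .inl fun ρ σ hC =>
        hC.par_choice_of_preceqP (fun σ' hσ' => (hv ⟨σ', hσ'⟩).elim)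
          fun _ hZ => (SyncReds.not_fail_left hZ).elim
  · rintro (h | h) σ hC
    · exact (not_completeP_par_choice_fail_fail
        (h fail σ (completeP_par_choice_fail_iff.2 hC))).elim
    · exact completeP_par_choice_fail_iff.1 (h fail σ (completeP_par_choice_fail_iff.2 hC))
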